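/- arXiv:2502.10029 — 2 statements merged into one kernel-verified Lean document; each statement's English description precedes it below -/
import Mathlib

section
/- There exist 2^{ℵ₀}-dense subsets X, Y of the Cantor space 2^ω such that X avoids Y, i.e., no subset Z ⊆ X of cardinality 2^{ℵ₀} is homeomorphic to a subspace of Y. -/
open Cardinal Set

/-- `X` avoids `Y` (as subspaces of Cantor space): no subset of `X` of the same
cardinality as `X` is homeomorphic to a subspace of `Y`. -/
def Avoids (X Y : Set (ℕ → Bool)) : Prop :=
  ∀ Z : Set (ℕ → Bool), Z ⊆ X → Cardinal.mk ↥Z = Cardinal.mk ↥X →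
    ∀ W : Set (ℕ → Bool), W ⊆ Y → IsEmpty (↥Z ≃ₜ ↥W)

namespace Stmt14Aux

noncomputable section

abbrev C := ℕ → Bool

/-- Basic cylinder sets in Cantor space. -/
def cyl (l : List Bool) : Set C := {x | ∀ k, (h : k < l.length) → x k = l.get ⟨k, h⟩}

lemma isOpen_cyl (l : List Bool) : IsOpen (cyl l) := by
  have : cyl l = ⋂ k ∈ Finset.range l.length,
      {x : C | ∀ h : k < l.length, x k = l.get ⟨k, h⟩} := by
    ext x; simp [cyl]
  rw [this]
  apply isOpen_biInter_finset
  intro k hk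
  simp only [Finset.mem_range] at hk
  have : {x : C | ∀ h : k < l.length, x k = l.get ⟨k, hk⟩} =
      (fun x : C => x k) ⁻¹' {l.get ⟨k, hk⟩} := by
    ext x; simp [hk]
  rw [this]
  exact (continuous_apply k).isOpen_preimage _ (isOpen_discrete _)

lemma exists_cyl_subset {U : Set C} (hU : IsOpen U) {x : C} (hx : x ∈ U) :
    ∃ l, x ∈ cyl l ∧ cyl l ⊆ U := by
  rw [isOpen_pi_iff] at hU
  obtain ⟨I, u, h1, h2⟩ := hU x hx
  obtain ⟨n, hn⟩ : ∃ n, ∀ i ∈ I, i < n := ⟨(I.sup id) + 1, fun i hi =>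
    Nat.lt_succ_of_le (Finset.le_sup (f := id) hi)⟩
  refine ⟨List.ofFn (fun k : Fin n => x k), ?_, ?_⟩
  · intro k hk; simp
  · intro y hy
    apply h2
    intro i hi
    have hlt : i < n := hn i hi
    have : y i = x i := by
      have := hy i; simp only [List.length_ofFn] at this
      simpa using this hlt
    rw [this]
    exact (h1 i hi).2

/-- An embedding of Cantor space into a cylinder. -/
def cylEmb (l : List Bool) (x : C) : C :=
  fun k => if h : k < l.length then l.get ⟨k, h⟩ else x (k - l.length)

lemma cylEmb_mem (l : List Bool) (x : C) : cylEmb l x ∈ cyl l := by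
  intro k hk; simp [cylEmb, hk]

lemma cylEmb_inj (l : List Bool) : Function.Injective (cylEmb l) := by
  intro x y h
  funext k
  have := congrFun h (k + l.length)
  simpa [cylEmb] using this

lemma continuum_le_mk_cyl (l : List Bool) : continuum ≤ #(cyl l) := by
  have : #C ≤ #(cyl l) :=
    mk_le_of_injective (f := fun x => (⟨cylEmb l x, cylEmb_mem l x⟩ : cyl l))
      (fun x y h => cylEmb_inj l (by simpa using congrArg Subtype.val h))
  simpa [Cardinal.mk_arrow] using this

lemma ex_pt (l : List Bool) (B : Set C) (hB : #B < continuum) :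
    ∃ x, x ∈ cyl l ∧ x ∉ B := by
  by_contra h
  push_neg at h
  exact absurd ((continuum_le_mk_cyl l).trans (mk_le_mk_of_subset h)) hB.not_ge

/-- Open set coded by a set of cylinders. -/
def opn (s : Set (List Bool)) : Set C := ⋃ l ∈ s, cyl l

lemma opn_code {O : Set C} (hO : IsOpen O) : opn {l | cyl l ⊆ O} = O := by
  apply subset_antisymm
  · intro x hx
    simp only [opn, mem_iUnion] at hx
    obtain ⟨l, hl, hxl⟩ := hx
    exact hl hxl
  · intro x hx
    obtain ⟨l, h1, h2⟩ := exists_cyl_subset hO hx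
    exact mem_biUnion h2 h1

open Classical in
/-- A coded continuous total function. -/
def Ff (U : ℕ → Set (List Bool)) (x : C) : C := fun n => decide (x ∈ opn (U n))

/-- Codes for injective partial maps. -/
def Code : Type := (ℕ → Set (List Bool)) × (ℕ → Set (List Bool))

def Code.F (c : Code) : C → C := Ff c.1

def Code.D (c : Code) : Set C := {x | Ff c.2 (c.F x) = x}

lemma Code.inj (c : Code) {x y : C} (hx : x ∈ c.D) (hy : y ∈ c.D)
    (h : c.F x = c.F y) : x = y := by
  have : Ff c.2 (c.F x) = Ff c.2 (c.F y) := by rw [h]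
  rwa [hx, hy] at this

/- key: given continuous σ : Z → C, get U with ∀ z : Z, Ff U z = σ z -/
lemma exists_Ucode {Z : Set C} (σ : Z → C) (hσ : Continuous σ) :
    ∃ U : ℕ → Set (List Bool), ∀ z : Z, Ff U z = σ z := by
  have hopen : ∀ n, ∃ O : Set C, IsOpen O ∧ ∀ z : Z, σ z n = true ↔ (z : C) ∈ O := by
    intro n
    have h1 : IsOpen {z : Z | σ z n = true} := by
      have : {z : Z | σ z n = true} = (fun z : Z => σ z n) ⁻¹' {true} := rfl
      rw [this]
      exact (((continuous_apply n).comp hσ)).isOpen_preimage _ (isOpen_discrete _)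
    rw [isOpen_induced_iff] at h1
    obtain ⟨O, hO, hpre⟩ := h1
    refine ⟨O, hO, fun z => ?_⟩
    constructor
    · intro h
      have : z ∈ Subtype.val ⁻¹' O := by rw [hpre]; exact h
      exact this
    · intro h
      have : z ∈ Subtype.val ⁻¹' O := h
      rw [hpre] at this; exact this
  choose O hO hmem using hopen
  refine ⟨fun n => {l | cyl l ⊆ O n}, fun z => ?_⟩
  funext n
  rw [Ff, opn_code (hO n)]
  by_cases h : (z : C) ∈ O n
  · simp [h, ((hmem n z).mpr h)]
  · simp only [h, decide_false]
    by_contra hc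
    have : σ z n = true := by
      cases hb : σ z n
      · rw [hb] at hc; simp at hc
      · rfl
    exact h ((hmem n z).mp this)



lemma mk_code : #Code = continuum := by
  have h1 : #(Set (List Bool)) = continuum := by
    rw [mk_set, mk_list_eq_aleph0, ← continuum]
  have h2 : #(ℕ → Set (List Bool)) = continuum := by
    rw [mk_arrow, lift_id, lift_id, h1, mk_nat, continuum_power_aleph0]
  show #((ℕ → Set (List Bool)) × (ℕ → Set (List Bool))) = continuum
  rw [mk_prod]; simp only [lift_id]; rw [h2, continuum_mul_self]

abbrev ι : Type := (Cardinal.continuum.ord).ToType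

lemma mk_iota : #ι = continuum := mk_ord_toType _

lemma mk_Iio_lt (i : ι) : #(Iio i) < continuum := mk_Iio_ord_toType i

lemma mk_Iic_lt (i : ι) : #(Set.Iic i) < continuum := by
  have : Iic i ⊆ insert i (Iio i) := by
    intro j hj
    rcases (mem_Iic.mp hj).lt_or_eq with h | h
    · exact Or.inr h
    · exact Or.inl h
  calc #(Iic i) ≤ #(insert i (Iio i) : Set ι) := mk_le_mk_of_subset this
    _ ≤ #(Iio i) + 1 := mk_insert_le
    _ < continuum := add_lt_of_lt aleph0_le_continuum (mk_Iio_lt i) (one_lt_aleph0.trans aleph0_lt_continuum)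

noncomputable def tf : ι ≃ List Bool × ι :=
  Classical.choice (Cardinal.eq.mp (by
    rw [mk_iota, mk_prod, lift_id, lift_id, mk_list_eq_aleph0, mk_iota, aleph0_mul_continuum]))

noncomputable def en : ι ≃ Code :=
  Classical.choice (Cardinal.eq.mp (by rw [mk_iota, mk_code]))


def Xp (i : ι) (g : ∀ j, j < i → C × C) : Set C := range fun j : Iio i => (g j.1 j.2).1
def Yp (i : ι) (g : ∀ j, j < i → C × C) : Set C := range fun j : Iio i => (g j.1 j.2).2

lemma mk_Xp_lt (i : ι) (g : ∀ j, j < i → C × C) : #(Xp i g) < continuum :=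
  (mk_range_le).trans_lt (mk_Iio_lt i)
lemma mk_Yp_lt (i : ι) (g : ∀ j, j < i → C × C) : #(Yp i g) < continuum :=
  (mk_range_le).trans_lt (mk_Iio_lt i)

def xBad (i : ι) (g : ∀ j, j < i → C × C) : Set C :=
  Xp i g ∪ ⋃ j : Iio i, {x | x ∈ (en j.1).D ∧ (en j.1).F x ∈ Yp i g}

def yBad (i : ι) (g : ∀ j, j < i → C × C) (x : C) : Set C :=
  Yp i g ∪ ⋃ j : Iio i, (en j.1).F '' ((en j.1).D ∩ insert x (Xp i g))

lemma mk_xBad_lt (i : ι) (g : ∀ j, j < i → C × C) : #(xBad i g) < continuum := by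
  have hB : ∀ j : Iio i, #({x | x ∈ (en j.1).D ∧ (en j.1).F x ∈ Yp i g}) ≤ #(Yp i g) := by
    intro j
    apply mk_le_of_injective (f := fun x => (⟨(en j.1).F x.1, x.2.2⟩ : Yp i g))
    intro a b hab
    exact Subtype.ext ((en j.1).inj a.2.1 b.2.1 (by simpa using congrArg Subtype.val hab))
  have hU : #(⋃ j : Iio i, {x | x ∈ (en j.1).D ∧ (en j.1).F x ∈ Yp i g}) < continuum := by
    calc #(⋃ j : Iio i, {x | x ∈ (en j.1).D ∧ (en j.1).F x ∈ Yp i g})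
        ≤ #(Iio i) * ⨆ j : Iio i, #({x | x ∈ (en j.1).D ∧ (en j.1).F x ∈ Yp i g}) :=
          mk_iUnion_le _
      _ ≤ #(Iio i) * #(Yp i g) := by
          apply mul_le_mul_right
          exact ciSup_le' hB
      _ < continuum := mul_lt_of_lt aleph0_le_continuum (mk_Iio_lt i) (mk_Yp_lt i g)
  calc #(xBad i g) ≤ #(Xp i g) + #(⋃ j : Iio i, {x | x ∈ (en j.1).D ∧ (en j.1).F x ∈ Yp i g}) :=
        mk_union_le _ _
    _ < continuum := add_lt_of_lt aleph0_le_continuum (mk_Xp_lt i g) hU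

lemma mk_yBad_lt (i : ι) (g : ∀ j, j < i → C × C) (x : C) : #(yBad i g x) < continuum := by
  have hins : #(insert x (Xp i g) : Set C) < continuum :=
    (mk_insert_le).trans_lt (add_lt_of_lt aleph0_le_continuum (mk_Xp_lt i g)
      (one_lt_aleph0.trans aleph0_lt_continuum))
  have hU : #(⋃ j : Iio i, (en j.1).F '' ((en j.1).D ∩ insert x (Xp i g))) < continuum := by
    calc #(⋃ j : Iio i, (en j.1).F '' ((en j.1).D ∩ insert x (Xp i g)))
        ≤ #(Iio i) * ⨆ j : Iio i, #((en j.1).F '' ((en j.1).D ∩ insert x (Xp i g))) :=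
          mk_iUnion_le _
      _ ≤ #(Iio i) * #(insert x (Xp i g) : Set C) := by
          apply mul_le_mul_right
          apply ciSup_le'
          intro j
          exact (mk_image_le).trans (mk_le_mk_of_subset inter_subset_right)
      _ < continuum := mul_lt_of_lt aleph0_le_continuum (mk_Iio_lt i) hins
  calc #(yBad i g x) ≤ #(Yp i g) + _ := mk_union_le _ _
    _ < continuum := add_lt_of_lt aleph0_le_continuum (mk_Yp_lt i g) hU

def step (i : ι) (g : ∀ j, j < i → C × C) : C × C :=
  let x := Classical.choose (ex_pt (tf i).1 (xBad i g) (mk_xBad_lt i g))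
  (x, Classical.choose (ex_pt (tf i).1 (yBad i g x) (mk_yBad_lt i g x)))

def seq : ι → C × C := WellFounded.fix (wellFounded_lt) step

lemma seq_eq (i : ι) : seq i = step i (fun j _ => seq j) :=
  WellFounded.fix_eq _ _ _

def xs (i : ι) : C := (seq i).1
def ys (i : ι) : C := (seq i).2

lemma seq_spec (i : ι) :
    (xs i ∈ cyl (tf i).1 ∧ xs i ∉ xBad i (fun j _ => seq j)) ∧
    (ys i ∈ cyl (tf i).1 ∧ ys i ∉ yBad i (fun j _ => seq j) (xs i)) := by
  have h := seq_eq i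
  set g : ∀ j, j < i → C × C := fun j _ => seq j with hg
  have hx := Classical.choose_spec (ex_pt (tf i).1 (xBad i g) (mk_xBad_lt i g))
  have hxs : xs i = Classical.choose (ex_pt (tf i).1 (xBad i g) (mk_xBad_lt i g)) := by
    rw [xs, h]; rfl
  have hys : ys i = Classical.choose (ex_pt (tf i).1
      (yBad i g (Classical.choose (ex_pt (tf i).1 (xBad i g) (mk_xBad_lt i g))))
      (mk_yBad_lt i g _)) := by
    rw [ys, h]; rfl
  have hy := Classical.choose_spec (ex_pt (tf i).1
      (yBad i g (Classical.choose (ex_pt (tf i).1 (xBad i g) (mk_xBad_lt i g))))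
      (mk_yBad_lt i g _))
  constructor
  · rw [hxs]; exact hx
  · rw [hys, hxs]; exact hy

lemma seq_def (i : ι) : seq i = (xs i, ys i) := rfl

lemma xs_cyl (i : ι) : xs i ∈ cyl (tf i).1 := (seq_spec i).1.1
lemma ys_cyl (i : ι) : ys i ∈ cyl (tf i).1 := (seq_spec i).2.1

lemma xs_ne (i : ι) {j : ι} (hj : j < i) : xs i ≠ xs j := by
  intro h
  apply (seq_spec i).1.2
  exact Or.inl ⟨⟨j, hj⟩, by show (seq j).1 = _; rw [seq_def]; exact h.symm⟩

lemma ys_ne (i : ι) {j : ι} (hj : j < i) : ys i ≠ ys j := by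
  intro h
  apply (seq_spec i).2.2
  exact Or.inl ⟨⟨j, hj⟩, by show (seq j).2 = _; rw [seq_def]; exact h.symm⟩

lemma xs_inj : Function.Injective xs := by
  intro a b hab
  rcases lt_trichotomy a b with h | h | h
  · exact absurd hab.symm (xs_ne b h)
  · exact h
  · exact absurd hab (xs_ne a h)

lemma xs_code {i j γ : ι} (hj : j < i) (hγ : γ < i) (hD : xs i ∈ (en j).D) :
    (en j).F (xs i) ≠ ys γ := by
  intro h
  apply (seq_spec i).1.2
  refine Or.inr (mem_iUnion.mpr ⟨⟨j, hj⟩, hD, ?_⟩)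
  exact ⟨⟨γ, hγ⟩, by show (seq γ).2 = _; rw [seq_def]; exact h.symm⟩

lemma ys_code {i j δ : ι} (hj : j < i) (hδ : δ ≤ i) (hD : xs δ ∈ (en j).D) :
    ys i ≠ (en j).F (xs δ) := by
  intro h
  apply (seq_spec i).2.2
  refine Or.inr (mem_iUnion.mpr ⟨⟨j, hj⟩, ?_⟩)
  refine ⟨xs δ, ⟨hD, ?_⟩, h.symm⟩
  rcases hδ.lt_or_eq with h' | h'
  · exact Or.inr ⟨⟨δ, h'⟩, by show (seq δ).1 = _; rw [seq_def]⟩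
  · exact Or.inl (by rw [h'])

def XS : Set C := range xs
def YS : Set C := range ys

lemma key {c : Code} {α : ι} (hc : en α = c) {β : ι} (hβ : α < β)
    (hD : xs β ∈ c.D) : c.F (xs β) ∉ YS := by
  rintro ⟨γ, hγ⟩
  rcases lt_trichotomy γ β with h | h | h
  · exact xs_code hβ h (hc ▸ hD) (hc ▸ hγ.symm)
  · subst h
    exact ys_code hβ le_rfl (hc ▸ hD) (hc ▸ hγ.symm).symm
  · exact ys_code (hβ.trans h) h.le (hc ▸ hD) (hc ▸ hγ.symm).symm

lemma mk_inter_eq (s : ι → C) (hinj : Function.Injective s)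
    (hcyl : ∀ i, s i ∈ cyl (tf i).1)
    (U : Set C) (hU : IsOpen U) (hne : U.Nonempty) :
    #(range s ∩ U : Set C) = continuum := by
  obtain ⟨x, hx⟩ := hne
  obtain ⟨l, _, hsub⟩ := exists_cyl_subset hU hx
  apply le_antisymm
  · calc #(range s ∩ U : Set C) ≤ #C := mk_set_le _
      _ = continuum := by simp [Cardinal.mk_arrow]
  · have hmem : ∀ k : ι, s (tf.symm (l, k)) ∈ range s ∩ U := by
      intro k
      refine ⟨mem_range_self _, hsub ?_⟩
      have := hcyl (tf.symm (l, k))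
      rwa [Equiv.apply_symm_apply] at this
    have : #ι ≤ #(range s ∩ U : Set C) := by
      apply mk_le_of_injective (f := fun k : ι => (⟨s (tf.symm (l, k)), hmem k⟩ : (range s ∩ U : Set C)))
      intro a b hab
      have h1 := hinj (by simpa using congrArg Subtype.val hab)
      have h2 : (l, a) = (l, b) := tf.symm.injective h1
      exact congrArg Prod.snd h2
    rwa [mk_ord_toType] at this

lemma ys_inj : Function.Injective ys := by
  intro a b hab
  rcases lt_trichotomy a b with h | h | h
  · exact absurd hab.symm (ys_ne b h)
  · exact h
  · exact absurd hab (ys_ne a h)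

lemma exists_code {Z W : Set C} (φ : ↥Z ≃ₜ ↥W) :
    ∃ c : Code, ∀ z (hz : z ∈ Z), z ∈ c.D ∧ c.F z = (φ ⟨z, hz⟩ : C) := by
  obtain ⟨U, hU⟩ := exists_Ucode (fun z : Z => (φ z : C))
    (continuous_subtype_val.comp φ.continuous)
  obtain ⟨V, hV⟩ := exists_Ucode (fun w : W => (φ.symm w : C))
    (continuous_subtype_val.comp φ.symm.continuous)
  refine ⟨(U, V), fun z hz => ?_⟩
  have h1 : Ff U z = (φ ⟨z, hz⟩ : C) := hU ⟨z, hz⟩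
  refine ⟨?_, h1⟩
  show Ff V (Ff U z) = z
  rw [h1]
  have h3 := hV (φ ⟨z, hz⟩)
  rw [h3]
  simp

lemma mk_XS : #XS = continuum := by
  rw [XS, mk_range_eq xs xs_inj]
  exact mk_ord_toType _

lemma avoids : Avoids XS YS := by
  intro Z hZX hmk W hWY
  constructor
  intro φ
  obtain ⟨c, hc⟩ := exists_code φ
  have henα : en (en.symm c) = c := en.apply_symm_apply c
  set α := en.symm c
  have hsub : Z ⊆ xs '' (Set.Iic α) := by
    intro z hz
    obtain ⟨β, hβ⟩ := hZX hz
    by_cases hle : β ≤ α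
    · exact ⟨β, hle, hβ⟩
    · push_neg at hle
      exfalso
      have hD : xs β ∈ c.D := by rw [hβ]; exact (hc z hz).1
      apply key henα hle hD
      have h2 : c.F (xs β) = (φ ⟨z, hz⟩ : C) := by rw [hβ]; exact (hc z hz).2
      rw [h2]
      exact hWY (φ ⟨z, hz⟩).2
  have h1 : #(↥Z) ≤ #(Set.Iic α) := (mk_le_mk_of_subset hsub).trans mk_image_le
  have hfin : (continuum : Cardinal) < continuum := by
    calc continuum = #(↥Z) := by rw [hmk, mk_XS]
      _ ≤ #(Set.Iic α) := h1
      _ < continuum := mk_Iic_lt α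
  exact lt_irrefl _ hfin

end

end Stmt14Aux

/-- There exist `2^ℵ₀`-dense subsets `X, Y` of the Cantor space such that `X` avoids
`Y`: no subset of `X` of cardinality continuum is homeomorphic to a subspace of `Y`. -/
theorem stmt_14 :
    ∃ X Y : Set (ℕ → Bool),
      (∀ U : Set (ℕ → Bool), IsOpen U → U.Nonempty →
        Cardinal.mk ↥(X ∩ U) = Cardinal.continuum) ∧
      (∀ U : Set (ℕ → Bool), IsOpen U → U.Nonempty →
        Cardinal.mk ↥(Y ∩ U) = Cardinal.continuum) ∧
      Avoids X Y := by
  refine ⟨Stmt14Aux.XS, Stmt14Aux.YS, ?_, ?_, Stmt14Aux.avoids⟩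
  · intro U hU hne
    exact Stmt14Aux.mk_inter_eq Stmt14Aux.xs Stmt14Aux.xs_inj Stmt14Aux.xs_cyl U hU hne
  · intro U hU hne
    exact Stmt14Aux.mk_inter_eq Stmt14Aux.ys Stmt14Aux.ys_inj Stmt14Aux.ys_cyl U hU hne
end

section
/- Let X be a perfect Polish space containing a closed nowhere dense set F ⊆ X such that every autohomeomorphism h : X → X satisfies h''F = F, and let κ be an infinite cardinal ≤ 2^{ℵ₀}. Then there exist κ-dense sets A, B ⊆ X such that no autohomeomorphism of X maps A onto B; hence BA_κ(X) fails. -/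
open Cardinal Set

/-- `A` is `κ`-dense if it meets every nonempty open set in exactly `κ` points. -/
def KDense {P : Type*} [TopologicalSpace P] (κ : Cardinal) (A : Set P) : Prop :=
  ∀ U : Set P, IsOpen U → U.Nonempty → Cardinal.mk ↥(A ∩ U) = κ

/-- Every nonempty open subset of a perfect Polish space has at least continuum many
points. -/
lemma continuum_le_mk_open {X : Type*} [TopologicalSpace X] [PolishSpace X]
    [PerfectSpace X] {U : Set X} (hU : IsOpen U) (hUne : U.Nonempty) :
    Cardinal.continuum ≤ Cardinal.mk ↥U := by
  letI := TopologicalSpace.upgradeIsCompletelyMetrizable X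
  obtain ⟨x, hx⟩ := hUne
  obtain ⟨r, hr, hball⟩ := Metric.isOpen_iff.mp hU x hx
  set V := Metric.ball x (r / 2) with hV
  have hVne : V.Nonempty := ⟨x, Metric.mem_ball_self (by linarith)⟩
  have hVpre : Preperfect V := by
    have := PerfectSpace.univ_preperfect (α := X)
    simpa using this.open_inter Metric.isOpen_ball
  have hVperf : Perfect (closure V) := hVpre.perfect_closure
  have hsub : closure V ⊆ U := by
    refine (Metric.closure_ball_subset_closedBall).trans ?_
    refine (Metric.closedBall_subset_ball (by linarith)).trans hball
  obtain ⟨f, hfr, -, hfi⟩ := hVperf.exists_nat_bool_injection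
    (hVne.mono subset_closure)
  have hgi : Function.Injective (fun a : ℕ → Bool => (⟨f a, hfr (Set.mem_range_self a)⟩ :
      ↥(closure V))) := fun a b hab => hfi (congrArg Subtype.val hab)
  have : Cardinal.continuum ≤ Cardinal.mk ↥(closure V) := by
    simpa using Cardinal.lift_mk_le_lift_mk_of_injective hgi
  exact this.trans (Cardinal.mk_le_mk_of_subset hsub)

/-- In a perfect Polish space, for every closed nowhere dense `F` and infinite
`κ ≤ 𝔠`, there is a `κ`-dense set disjoint from `F`. -/
lemma exists_kDense_disjoint {X : Type*} [TopologicalSpace X] [PolishSpace X]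
    [PerfectSpace X] (F : Set X) (hFc : IsClosed F) (hFnwd : IsNowhereDense F)
    (κ : Cardinal) (hκ0 : Cardinal.aleph0 ≤ κ) (hκ1 : κ ≤ Cardinal.continuum) :
    ∃ B : Set X, KDense κ B ∧ B ∩ F = ∅ := by
  classical
  set ι := {b : Set X // b ∈ TopologicalSpace.countableBasis X ∧ b.Nonempty} with hι
  have hchoice : ∀ i : ι, ∃ S : Set X, S ⊆ i.1 \ F ∧ Cardinal.mk ↥S = κ := by
    rintro ⟨b, hb, hbne⟩
    have hbo : IsOpen b := (TopologicalSpace.isBasis_countableBasis X).isOpen hb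
    have hbFo : IsOpen (b \ F) := hbo.sdiff hFc
    have hiF : interior F = ∅ := by
      rw [← hFc.closure_eq]; exact hFnwd
    have hbFne : (b \ F).Nonempty := by
      rcases Set.eq_empty_or_nonempty (b \ F) with h | h
      · exfalso
        have hsub : b ⊆ F := Set.diff_eq_empty.mp h
        have hbi : b ⊆ interior F := interior_maximal hsub hbo
        rw [hiF] at hbi
        obtain ⟨y, hy⟩ := hbne
        exact absurd (hbi hy) (Set.notMem_empty y)
      · exact h
    have hcard : κ ≤ Cardinal.mk ↥(b \ F) :=
      hκ1.trans (continuum_le_mk_open hbFo hbFne)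
    obtain ⟨S, hS, hScard⟩ := Cardinal.le_mk_iff_exists_subset.mp hcard
    exact ⟨S, hS, hScard⟩
  choose S hSsub hScard using hchoice
  refine ⟨⋃ i, S i, ?_, ?_⟩
  · intro U hU hUne
    have hle : Cardinal.mk ↥(⋃ i, S i) ≤ κ := by
      have h1 : Cardinal.mk ↥(⋃ i, S i) ≤ Cardinal.mk ι * ⨆ i, Cardinal.mk ↥(S i) :=
        Cardinal.mk_iUnion_le S
      have hιc : Cardinal.mk ι ≤ Cardinal.aleph0 := by
        have : (TopologicalSpace.countableBasis X).Countable :=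
          TopologicalSpace.countable_countableBasis X
        have hc : ({b : Set X | b ∈ TopologicalSpace.countableBasis X ∧ b.Nonempty}).Countable :=
          this.mono (fun b hb => hb.1)
        exact Cardinal.mk_le_aleph0_iff.mpr hc
      have hsup : (⨆ i, Cardinal.mk ↥(S i)) ≤ κ := by
        apply ciSup_le'
        intro i
        exact (hScard i).le
      calc Cardinal.mk ↥(⋃ i, S i) ≤ Cardinal.mk ι * ⨆ i, Cardinal.mk ↥(S i) := h1
        _ ≤ Cardinal.aleph0 * κ := mul_le_mul' hιc hsup
        _ = κ := Cardinal.aleph0_mul_eq hκ0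
    obtain ⟨x, hxU⟩ := hUne
    obtain ⟨b, hb, hxb, hbU⟩ :=
      (TopologicalSpace.isBasis_countableBasis X).exists_subset_of_mem_open hxU hU
    set i : ι := ⟨b, hb, ⟨x, hxb⟩⟩ with hi
    have hge : κ ≤ Cardinal.mk ↥((⋃ i, S i) ∩ U) := by
      rw [← hScard i]
      apply Cardinal.mk_le_mk_of_subset
      intro y hy
      exact ⟨Set.mem_iUnion.mpr ⟨i, hy⟩, hbU ((hSsub i hy).1)⟩
    exact le_antisymm ((Cardinal.mk_le_mk_of_subset (Set.inter_subset_left)).trans hle) hge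
  · apply Set.eq_empty_iff_forall_notMem.mpr
    rintro x ⟨hx, hxF⟩
    obtain ⟨i, hi⟩ := Set.mem_iUnion.mp hx
    exact (hSsub i hi).2 hxF

/-- If a perfect Polish space `X` has a nonempty closed nowhere dense set `F` fixed
(setwise) by every autohomeomorphism, then for every infinite `κ ≤ 2^ℵ₀` there are
`κ`-dense sets `A, B ⊆ X` with no autohomeomorphism mapping `A` onto `B`;
hence `BA_κ(X)` fails. -/
theorem stmt_18 (X : Type*) [TopologicalSpace X] [PolishSpace X] [PerfectSpace X]
    (F : Set X) (hFc : IsClosed F) (hFnwd : IsNowhereDense F) (hFne : F.Nonempty)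
    (hFinv : ∀ h : X ≃ₜ X, h '' F = F)
    (κ : Cardinal) (hκ0 : Cardinal.aleph0 ≤ κ) (hκ1 : κ ≤ Cardinal.continuum) :
    ∃ A B : Set X, KDense κ A ∧ KDense κ B ∧ ∀ h : X ≃ₜ X, h '' A ≠ B := by
  obtain ⟨B, hBdense, hBF⟩ := exists_kDense_disjoint F hFc hFnwd κ hκ0 hκ1
  obtain ⟨x₀, hx₀⟩ := hFne
  refine ⟨insert x₀ B, B, ?_, hBdense, ?_⟩
  · intro U hU hUne
    have hge : κ ≤ Cardinal.mk ↥(insert x₀ B ∩ U) := by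
      rw [← hBdense U hU hUne]
      exact Cardinal.mk_le_mk_of_subset (Set.inter_subset_inter_left U (Set.subset_insert _ _))
    have hle : Cardinal.mk ↥(insert x₀ B ∩ U) ≤ κ := by
      have h1 : insert x₀ B ∩ U ⊆ insert x₀ (B ∩ U) := by
        rintro y ⟨hy, hyU⟩
        rcases hy with rfl | hyB
        · exact Set.mem_insert _ _
        · exact Set.mem_insert_of_mem _ ⟨hyB, hyU⟩
      calc Cardinal.mk ↥(insert x₀ B ∩ U) ≤ Cardinal.mk ↥(insert x₀ (B ∩ U)) :=
            Cardinal.mk_le_mk_of_subset h1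
        _ ≤ Cardinal.mk ↥(B ∩ U) + 1 := Cardinal.mk_insert_le
        _ = κ + 1 := by rw [hBdense U hU hUne]
        _ = κ := Cardinal.add_one_eq hκ0
    exact le_antisymm hle hge
  · intro h hAB
    have hx₀B : h x₀ ∈ B := by
      rw [← hAB]
      exact ⟨x₀, Set.mem_insert _ _, rfl⟩
    have hx₀F : h x₀ ∈ F := by
      rw [← hFinv h]
      exact ⟨x₀, hx₀, rfl⟩
    exact Set.eq_empty_iff_forall_notMem.mp hBF (h x₀) ⟨hx₀B, hx₀F⟩
end
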